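/- Suppose g^j → g in X and for each j, u^j satisfies ∂Φ(u^j) ∩ J_p(g^j) ≠ ∅. Then there is a subsequence (u^{j_ℓ}) converging to some u with ∂Φ(u) ∩ J_p(g) ≠ ∅ and Φ(u) = lim_ℓ Φ(u^{j_ℓ}). -/

import Mathlib

/-! A common element ξ of `∂Φ(u)` and `J_p(g)` exists exactly when `u` minimises
`w ↦ Φ(w) + ‖u + g - w‖^p / p` over the domain of `Φ`; the nontrivial direction is the sum rule
for the subdifferential, proved by Hahn–Banach separation since the second summand is continuous.
Testing ξ at `0` and at `t • u`, with `t^(p-1) = λ/2`, and using `λ‖u‖^p ≤ pΦ(u)` bounds `Φ(u^j)`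
in terms of `‖g^j‖`, so a subsequence converges in a compact sublevel set. Lower semicontinuity
from below and minimality of `u^j` tested at the limit `u` from above give `Φ(u^{j_ℓ}) → Φ(u)`;
then minimality passes to the limit, and the sum rule returns the subgradient at `u`. -/

open Filter Set MeasureTheory Topology
open scoped ENNReal NNReal

noncomputable section

variable {X : Type*} [NormedAddCommGroup X] [NormedSpace ℝ X] [CompleteSpace X]

/-- Subdifferential of an `EReal`-valued functional `Φ` at `u`. -/
def ERealSubdiff (Φ : X → EReal) (u : X) : Set (X →L[ℝ] ℝ) :=
  {ξ | ∀ w : X, Φ u + ((ξ (w - u) : ℝ) : EReal) ≤ Φ w}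

/-- The duality map `J_p`: the subdifferential of `‖·‖^p / p` at `u`. -/
def Jdual (p : ℝ) (u : X) : Set (X →L[ℝ] ℝ) :=
  {ξ | ∀ w : X, ‖u‖ ^ p / p + ξ (w - u) ≤ ‖w‖ ^ p / p}

/-- Convexity for an `EReal`-valued functional. -/
def IsConvexE (Φ : X → EReal) : Prop :=
  ∀ u v : X, ∀ a b : ℝ, 0 ≤ a → 0 ≤ b → a + b = 1 →
    Φ (a • u + b • v) ≤ (a : EReal) * Φ u + (b : EReal) * Φ v

/-- Strict convexity on the domain `{Φ < ∞}`. -/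
def IsStrictConvexOnDom (Φ : X → EReal) : Prop :=
  ∀ u v : X, Φ u ≠ ⊤ → Φ v ≠ ⊤ → u ≠ v → ∀ a b : ℝ, 0 < a → 0 < b → a + b = 1 →
    Φ (a • u + b • v) < (a : EReal) * Φ u + (b : EReal) * Φ v

/-- Positive homogeneity of degree `p`. -/
def IsHomog (Φ : X → EReal) (p : ℝ) : Prop :=
  ∀ t : ℝ, 0 ≤ t → ∀ u : X, Φ (t • u) = ((t ^ p : ℝ) : EReal) * Φ u

/-- The set of Rayleigh quotients `p Φ(u)/‖u‖^p` over nonzero `u` in the domain. -/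
def RayleighSet (Φ : X → EReal) (p : ℝ) : Set ℝ :=
  {r | ∃ u : X, u ≠ 0 ∧ Φ u ≠ ⊤ ∧ r = p * (Φ u).toReal / ‖u‖ ^ p}

/-- Simplicity of the least Rayleigh quotient `lam`. -/
def IsSimple (Φ : X → EReal) (p lam : ℝ) : Prop :=
  ∀ u v : X, u ≠ 0 → v ≠ 0 → Φ u ≠ ⊤ → Φ v ≠ ⊤ →
    lam = p * (Φ u).toReal / ‖u‖ ^ p → lam = p * (Φ v).toReal / ‖v‖ ^ p →
    ∃ c : ℝ, v = c • u

/-- `P_w(u)`: best approximations of `u` from the ray `{β w : β ≥ 0}`. -/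
def ProjRay (w u : X) : Set X :=
  {x | ∃ α : ℝ, 0 ≤ α ∧ x = α • w ∧ ∀ β : ℝ, 0 ≤ β → ‖u - α • w‖ ≤ ‖u - β • w‖}

/-- `α_w(u) := inf {α > 0 : α w ∈ P_w(u)}`. -/
def alphaRay (w u : X) : ℝ :=
  sInf {α : ℝ | 0 < α ∧ α • w ∈ ProjRay w u}

/-- Local absolute continuity of a path on `[0, ∞)`. -/
def LocAC {E : Type*} [NormedAddCommGroup E] (v : ℝ → E) : Prop :=
  ∀ T : ℝ, 0 < T → ∃ h : ℝ → ℝ, IntegrableOn h (Icc 0 T) ∧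
    ∀ s t : ℝ, 0 ≤ s → s ≤ t → t ≤ T → ‖v t - v s‖ ≤ ∫ τ in Icc s t, h τ

/-- `m` is the metric derivative of `v` (a.e. on `(0,∞)`). -/
def HasMetricDeriv {E : Type*} [NormedAddCommGroup E] (v : ℝ → E) (m : ℝ → ℝ) : Prop :=
  ∀ᵐ t ∂(volume.restrict (Ioi (0:ℝ))),
    Tendsto (fun h : ℝ => ‖v (t + h) - v t‖ / |h|) (𝓝[≠] 0) (𝓝 (m t))

/-- Local slope `|∂Φ|(u) = limsup_{z → 0} (Φ(u) − Φ(u+z))⁺ / ‖z‖`, valued in `[0,∞]`. -/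
def localSlope (Φ : X → EReal) (u : X) : ℝ≥0∞ :=
  Filter.limsup (fun z : X => ENNReal.ofReal ((Φ u - Φ (u + z)).toReal / ‖z‖)) (𝓝[≠] (0 : X))

/-- `v` is a `p`-curve of maximal slope for `Φ`, with metric derivative `m` and with
`φ` a real-valued a.e.-differentiable representative of `Φ ∘ v`; the defining inequality
`(Φ ∘ v)' ≤ -m^p/p - |∂Φ|(v)^q/q` holds a.e. on `(0,∞)`. -/
def IsPCurve (Φ : X → EReal) (p q : ℝ) (v : ℝ → X) (m : ℝ → ℝ) (φ : ℝ → ℝ) : Prop :=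
  LocAC v ∧ HasMetricDeriv v m ∧ (∀ t : ℝ, 0 ≤ t → (φ t : EReal) = Φ (v t)) ∧
  ∀ᵐ t ∂(volume.restrict (Ioi (0:ℝ))),
    ∃ d : ℝ, HasDerivAt φ d t ∧ d ≤ 0 ∧
      ENNReal.ofReal (m t ^ p / p) + localSlope Φ (v t) ^ q / ENNReal.ofReal q ≤
        ENNReal.ofReal (-d)

section Convex

variable {E : Type*} [NormedAddCommGroup E] [NormedSpace ℝ E]

theorem ConvexOn.rpow {s : Set E} {f : E → ℝ} {p : ℝ} (hf : ConvexOn ℝ s f)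
    (hf₀ : ∀ ⦃x⦄, x ∈ s → 0 ≤ f x) (hp : 1 ≤ p) : ConvexOn ℝ s fun x => f x ^ p :=
  ⟨hf.1, fun x hx y hy a b ha hb hab =>
    calc f (a • x + b • y) ^ p ≤ (a * f x + b * f y) ^ p :=
          Real.rpow_le_rpow (hf₀ (hf.1 hx hy ha hb hab)) (hf.2 hx hy ha hb hab) (by linarith)
      _ ≤ a • f x ^ p + b • f y ^ p :=
          (convexOn_rpow hp).2 (hf₀ hx) (hf₀ hy) ha hb hab⟩

/-- The sum rule for subgradients at a minimiser of `f + k`: separate the epigraph of `f` from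
the open strict hypograph of `f x₀ + k x₀ - k`, and normalise the separating functional in
the `ℝ`-direction. -/
theorem ConvexOn.exists_subgradient_of_isMinOn_add {s : Set E} {f k : E → ℝ} {x₀ : E}
    (hf : ConvexOn ℝ s f) (hk : ConvexOn ℝ univ k) (hkc : Continuous k) (hx₀ : x₀ ∈ s)
    (hmin : IsMinOn (f + k) s x₀) :
    ∃ ξ : StrongDual ℝ E, (∀ x ∈ s, f x₀ + ξ (x - x₀) ≤ f x) ∧
      ∀ x, k x₀ - ξ (x - x₀) ≤ k x := by
  set m := f x₀ + k x₀
  set A := {q : E × ℝ | q.1 ∈ univ ∧ q.2 < ((fun _ : E => m) - k) q.1}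
  have hA : Convex ℝ A := ((concaveOn_const m convex_univ).sub hk).convex_strict_hypograph
  have hAo : IsOpen A := by
    simpa only [A, mem_univ, true_and, Function.comp_apply] using
      isOpen_lt continuous_snd ((continuous_const.sub hkc).comp continuous_fst)
  have hdisj : Disjoint A {q : E × ℝ | q.1 ∈ s ∧ f q.1 ≤ q.2} := by
    refine Set.disjoint_left.2 fun q ⟨_, hq⟩ ⟨hqs, hfq⟩ => ?_
    have := hmin hqs
    simp only [Pi.sub_apply, Pi.add_apply, mem_ofPred_eq] at hq this
    linarith
  obtain ⟨L, t, hLA, hLB⟩ := geometric_hahn_banach_open hA hAo hf.convex_epigraph hdisj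
  set c := L (0, 1)
  set ξ : StrongDual ℝ E := -c⁻¹ • L.comp (ContinuousLinearMap.inl ℝ E ℝ)
  have hL : ∀ x r, L (x, r) = L (x, 0) + r * c := by
    intro x r
    rw [← smul_eq_mul, ← map_smul, ← map_add, Prod.smul_mk, smul_zero, smul_eq_mul, mul_one,
      Prod.mk_add_mk, add_zero, zero_add]
  have hA' : ∀ x r, r < m - k x → L (x, 0) + r * c < t := fun x r hr =>
    hL x r ▸ hLA (x, r) ⟨mem_univ x, hr⟩
  have hB' : ∀ x ∈ s, t ≤ L (x, 0) + f x * c := fun x hx =>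
    hL x (f x) ▸ hLB (x, f x) ⟨hx, le_rfl⟩
  have hc : 0 < c := by
    have h1 := hA' x₀ (f x₀ - 1) (by simp [m])
    have h2 := hB' x₀ hx₀
    nlinarith
  have hξ : ∀ x, ξ x = -(L (x, 0) / c) := fun x => by
    simp [ξ, div_eq_inv_mul]
  have hτ : ∀ x r, r < m - k x → r - ξ x < t / c := fun x r hr => by
    rw [hξ, lt_div_iff₀ hc]
    have := hA' x r hr
    field_simp
    linarith
  have hτs : ∀ x ∈ s, t / c ≤ f x - ξ x := fun x hx => by
    rw [hξ, div_le_iff₀ hc]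
    have := hB' x hx
    field_simp
    linarith
  have hτ₀ : f x₀ - ξ x₀ ≤ t / c := by
    have := le_of_forall_lt fun r hr => sub_lt_iff_lt_add.1 (hτ x₀ r (by simpa [m] using hr))
    linarith
  refine ⟨ξ, fun x hx => ?_, fun x => ?_⟩
  · have := hτs x hx
    rw [map_sub]
    linarith
  · have := le_of_forall_lt fun r hr => sub_lt_iff_lt_add.1 (hτ x r hr)
    rw [map_sub]
    linarith [hτs x₀ hx₀]

end Convex

/-- `toReal` sends `⊤` to `0`, so this is the intended energy `Φ(w) + ‖y - w‖^p / p` only on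
`{w | Φ w ≠ ⊤}`, the set over which it is minimised throughout. -/
def proxEnergy {E : Type*} [NormedAddCommGroup E] (Φ : E → EReal) (p : ℝ) (y w : E) : ℝ :=
  (Φ w).toReal + ‖y - w‖ ^ p / p

section Functional

variable {E : Type*} [NormedAddCommGroup E] {Φ : E → EReal} {p : ℝ}

theorem sInf_rayleighSet_mul_rpow_le (hp : 0 < p) (hnn : ∀ x, 0 ≤ Φ x) {x : E} (hx : Φ x ≠ ⊤) :
    sInf (RayleighSet Φ p) * ‖x‖ ^ p ≤ p * (Φ x).toReal := by
  have hp0 : 0 ≤ p * (Φ x).toReal := mul_nonneg hp.le (EReal.toReal_nonneg (hnn x))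
  rcases eq_or_ne x 0 with rfl | hx0
  · simpa [Real.zero_rpow hp.ne'] using hp0
  have hbdd : BddBelow (RayleighSet Φ p) := ⟨0, by
    rintro r ⟨y, -, -, rfl⟩
    have := EReal.toReal_nonneg (hnn y)
    positivity⟩
  rw [← le_div_iff₀ (by positivity)]
  exact csInf_le hbdd ⟨x, hx0, hx, rfl⟩

section NormedSpace

variable [NormedSpace ℝ E]

theorem IsHomog.map_zero (hΦ : IsHomog Φ p) (hp : 0 < p) : Φ 0 = 0 := by
  simpa [Real.zero_rpow hp.ne'] using hΦ 0 le_rfl 0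

theorem IsConvexE.convexOn_toReal (hΦ : IsConvexE Φ) (hbot : ∀ x, Φ x ≠ ⊥) :
    ConvexOn ℝ {x | Φ x ≠ ⊤} fun x => (Φ x).toReal := by
  have hle : ∀ u ∈ {x | Φ x ≠ ⊤}, ∀ v ∈ {x | Φ x ≠ ⊤}, ∀ a b : ℝ, 0 ≤ a → 0 ≤ b → a + b = 1 →
      Φ (a • u + b • v) ≤ ((a * (Φ u).toReal + b * (Φ v).toReal : ℝ) : EReal) := by
    intro u hu v hv a b ha hb hab
    simpa only [EReal.coe_add, EReal.coe_mul, EReal.coe_toReal hu (hbot u),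
      EReal.coe_toReal hv (hbot v)] using hΦ u v a b ha hb hab
  refine ⟨fun u hu v hv a b ha hb hab => ?_, fun u hu v hv a b ha hb hab => ?_⟩
  · exact ne_top_of_le_ne_top (EReal.coe_ne_top _) (hle u hu v hv a b ha hb hab)
  · have := EReal.toReal_le_toReal (hle u hu v hv a b ha hb hab) (hbot _) (EReal.coe_ne_top _)
    rwa [EReal.toReal_coe] at this

theorem ne_top_of_mem_ERealSubdiff {ξ : E →L[ℝ] ℝ} {u w : E} (hξ : ξ ∈ ERealSubdiff Φ u)
    (hw : Φ w ≠ ⊤) : Φ u ≠ ⊤ := by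
  intro hu
  have h := hξ w
  rw [hu, EReal.top_add_coe, top_le_iff] at h
  exact hw h

theorem mem_ERealSubdiff_iff (hbot : ∀ x, Φ x ≠ ⊥) {ξ : E →L[ℝ] ℝ} {u : E} (hu : Φ u ≠ ⊤) :
    ξ ∈ ERealSubdiff Φ u ↔ ∀ w, Φ w ≠ ⊤ → (Φ u).toReal + ξ (w - u) ≤ (Φ w).toReal := by
  refine forall_congr' fun w => ?_
  rcases eq_or_ne (Φ w) ⊤ with hw | hw
  · simp [hw]
  · rw [← EReal.coe_le_coe_iff, EReal.coe_add, EReal.coe_toReal hu (hbot u),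
      EReal.coe_toReal hw (hbot w)]
    exact ⟨fun h _ => h, fun h => h hw⟩

theorem apply_le_of_mem_Jdual {ξ : E →L[ℝ] ℝ} {g : E} (hξ : ξ ∈ Jdual p g) (w : E) :
    ξ w ≤ ‖w‖ ^ p / p + (2 ^ p - 2) * (‖g‖ ^ p / p) := by
  have hw := hξ w
  have h2g := hξ ((2 : ℝ) • g)
  rw [two_smul, add_sub_cancel_right, ← two_smul ℝ, norm_smul, Real.norm_two,
    Real.mul_rpow zero_le_two (norm_nonneg g)] at h2g
  rw [map_sub] at hw
  linarith [show 2 ^ p * ‖g‖ ^ p / p = 2 ^ p * (‖g‖ ^ p / p) from mul_div_assoc _ _ _]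

theorem mul_toReal_le_of_mem_ERealSubdiff_of_mem_Jdual (hp : 0 < p) (h0 : Φ 0 = 0)
    (hbot : ∀ x, Φ x ≠ ⊥) {lam t : ℝ} (hray : ∀ x, Φ x ≠ ⊤ → lam * ‖x‖ ^ p ≤ p * (Φ x).toReal)
    (ht : 0 < t) (htlam : t ^ (p - 1) = lam / 2) {ξ : E →L[ℝ] ℝ} {u g : E}
    (hu : ξ ∈ ERealSubdiff Φ u) (hg : ξ ∈ Jdual p g) :
    t * (Φ u).toReal ≤ 2 * ((2 ^ p - 2) * (‖g‖ ^ p / p)) := by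
  have hdom : Φ u ≠ ⊤ := ne_top_of_mem_ERealSubdiff hu (w := 0) (by simp [h0])
  have hξu : (Φ u).toReal ≤ ξ u := by
    have h := (mem_ERealSubdiff_iff hbot hdom).1 hu 0 (by simp [h0])
    rw [h0, zero_sub, map_neg, EReal.toReal_zero] at h
    linarith
  have htp : t ^ p = lam / 2 * t := by
    rw [← htlam, ← Real.rpow_add_one ht.ne', sub_add_cancel]
  have hξtu := apply_le_of_mem_Jdual hg (t • u)
  rw [map_smul, smul_eq_mul, norm_smul, Real.norm_of_nonneg ht.le,
    Real.mul_rpow ht.le (norm_nonneg u), htp] at hξtu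
  have hray' : lam / 2 * t * ‖u‖ ^ p / p ≤ t * (Φ u).toReal / 2 := by
    rw [div_le_iff₀ hp]
    nlinarith [hray u hdom]
  nlinarith [mul_le_mul_of_nonneg_left hξu ht.le]

theorem exists_forall_le_of_mem_ERealSubdiff_of_mem_Jdual {ι : Type*} (hp : 1 < p)
    (h0 : Φ 0 = 0) (hbot : ∀ x, Φ x ≠ ⊥) {lam : ℝ}
    (hray : ∀ x, Φ x ≠ ⊤ → lam * ‖x‖ ^ p ≤ p * (Φ x).toReal) (hlam : 0 < lam) {u g : ι → E}
    (hg : BddAbove (range fun i => ‖g i‖))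
    (hξ : ∀ i, ∃ ξ : E →L[ℝ] ℝ, ξ ∈ ERealSubdiff Φ (u i) ∧ ξ ∈ Jdual p (g i)) :
    ∃ M : ℝ, ∀ i, Φ (u i) ≤ M := by
  obtain ⟨B, hB⟩ := hg
  set t := (lam / 2) ^ (p - 1)⁻¹
  have ht : 0 < t := by positivity
  have htlam : t ^ (p - 1) = lam / 2 := Real.rpow_inv_rpow (by positivity) (by linarith)
  refine ⟨2 * ((2 ^ p - 2) * (B ^ p / p)) / t, fun i => ?_⟩
  obtain ⟨ξ, hξu, hξg⟩ := hξ i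
  have hdom := ne_top_of_mem_ERealSubdiff hξu (by simp [h0] : Φ 0 ≠ ⊤)
  rw [← EReal.coe_toReal hdom (hbot _), EReal.coe_le_coe_iff, le_div_iff₀' ht]
  refine (mul_toReal_le_of_mem_ERealSubdiff_of_mem_Jdual (by linarith) h0 hbot hray ht htlam
    hξu hξg).trans ?_
  have : ‖g i‖ ≤ B := hB ⟨i, rfl⟩
  have : (2 : ℝ) ≤ 2 ^ p := by simpa using Real.rpow_le_rpow_of_exponent_le one_le_two hp.le
  gcongr

theorem exists_mem_ERealSubdiff_inter_Jdual_iff_isMinOn (hp : 1 < p) (hΦ : IsConvexE Φ)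
    (hbot : ∀ x, Φ x ≠ ⊥) {u g : E} (hu : Φ u ≠ ⊤) :
    (∃ ξ : E →L[ℝ] ℝ, ξ ∈ ERealSubdiff Φ u ∧ ξ ∈ Jdual p g) ↔
      IsMinOn (proxEnergy Φ p (u + g)) {w | Φ w ≠ ⊤} u := by
  constructor
  · rintro ⟨ξ, hξu, hξg⟩
    refine isMinOn_iff.2 fun w hw => ?_
    have h1 := (mem_ERealSubdiff_iff hbot hu).1 hξu w hw
    have h2 := hξg (u + g - w)
    rw [show u + g - w - g = -(w - u) by abel, map_neg] at h2
    simp only [proxEnergy, add_sub_cancel_left]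
    linarith
  · intro hmin
    have hk : ConvexOn ℝ univ fun w => ‖u + g - w‖ ^ p / p := by
      refine (((convexOn_dist (u + g) convex_univ).rpow (fun _ _ => dist_nonneg) hp.le).smul
        (inv_nonneg.2 (by linarith : 0 ≤ p))).congr fun w _ => ?_
      show p⁻¹ * dist w (u + g) ^ p = _
      rw [dist_comm, dist_eq_norm, div_eq_inv_mul]
    have hkc : Continuous fun w => ‖u + g - w‖ ^ p / p :=
      ((continuous_const.sub continuous_id).norm.rpow_const fun _ => Or.inr (by linarith)).div_const p
    obtain ⟨ξ, hξu, hξg⟩ :=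
      (hΦ.convexOn_toReal hbot).exists_subgradient_of_isMinOn_add hk hkc hu hmin
    refine ⟨ξ, (mem_ERealSubdiff_iff hbot hu).2 hξu, fun w => ?_⟩
    · have h := hξg (u + g - w)
      rw [add_sub_cancel_left, sub_sub_cancel, show u + g - w - u = -(w - g) by abel,
        map_neg, sub_neg_eq_add] at h
      exact h

end NormedSpace

variable {ι : Type*} {l : Filter ι} {u g : E} {uᵢ gᵢ : ι → E}

theorem Filter.Tendsto.proxEnergy (hp : 0 ≤ p) {y w : ι → E}
    {y₀ w₀ : E} (hy : Tendsto y l (𝓝 y₀)) (hw : Tendsto w l (𝓝 w₀))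
    (hΦ : Tendsto (fun i => (Φ (w i)).toReal) l (𝓝 (Φ w₀).toReal)) :
    Tendsto (fun i => proxEnergy Φ p (y i) (w i)) l (𝓝 (proxEnergy Φ p y₀ w₀)) :=
  hΦ.add (((hy.sub hw).norm.rpow_const (Or.inr hp)).div_const p)

theorem tendsto_toReal_of_isMinOn_proxEnergy (hp : 0 < p) (hlsc : LowerSemicontinuous Φ)
    (hbot : ∀ x, Φ x ≠ ⊥) (hu : Tendsto uᵢ l (𝓝 u)) (hg : Tendsto gᵢ l (𝓝 g)) (hΦu : Φ u ≠ ⊤)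
    (hdom : ∀ i, Φ (uᵢ i) ≠ ⊤)
    (hmin : ∀ i, IsMinOn (proxEnergy Φ p (uᵢ i + gᵢ i)) {w | Φ w ≠ ⊤} (uᵢ i)) :
    Tendsto (fun i => (Φ (uᵢ i)).toReal) l (𝓝 (Φ u).toReal) := by
  refine tendsto_order.2 ⟨fun y hy => ?_, fun y hy => ?_⟩
  · have hy' : (y : EReal) < Φ u := by
      rwa [← EReal.coe_toReal hΦu (hbot u), EReal.coe_lt_coe_iff]
    filter_upwards [hu.eventually (hlsc u y hy')] with i hi
    rw [← EReal.coe_toReal (hdom i) (hbot _)] at hi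
    exact EReal.coe_lt_coe_iff.1 hi
  · have hb : Tendsto (fun i => proxEnergy Φ p (uᵢ i + gᵢ i) u - ‖gᵢ i‖ ^ p / p) l
        (𝓝 (proxEnergy Φ p (u + g) u - ‖g‖ ^ p / p)) :=
      ((hu.add hg).proxEnergy hp.le tendsto_const_nhds tendsto_const_nhds).sub
        ((hg.norm.rpow_const (Or.inr hp.le)).div_const p)
    simp only [proxEnergy, add_sub_cancel_left, add_sub_cancel_right] at hb
    filter_upwards [hb.eventually (gt_mem_nhds hy)] with i hi
    have := isMinOn_iff.1 (hmin i) u hΦu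
    simp only [proxEnergy, add_sub_cancel_left] at this
    linarith

theorem isMinOn_proxEnergy_of_tendsto [l.NeBot] (hp : 0 ≤ p) (hu : Tendsto uᵢ l (𝓝 u))
    (hg : Tendsto gᵢ l (𝓝 g)) (hΦ : Tendsto (fun i => (Φ (uᵢ i)).toReal) l (𝓝 (Φ u).toReal))
    (hmin : ∀ i, IsMinOn (proxEnergy Φ p (uᵢ i + gᵢ i)) {w | Φ w ≠ ⊤} (uᵢ i)) :
    IsMinOn (proxEnergy Φ p (u + g)) {w | Φ w ≠ ⊤} u :=
  isMinOn_iff.2 fun w hw => le_of_tendsto_of_tendsto'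
    ((hu.add hg).proxEnergy hp hu hΦ)
    ((hu.add hg).proxEnergy hp tendsto_const_nhds tendsto_const_nhds)
    fun i => isMinOn_iff.1 (hmin i) w hw

end Functional

theorem inverse_iteration_compactness_general (Φ : X → EReal) (p lam : ℝ) (hp : 1 < p)
    (hnn : ∀ x : X, (0 : EReal) ≤ Φ x)
    (hconv : IsConvexE Φ)
    (hlsc : LowerSemicontinuous Φ) (hhom : IsHomog Φ p)
    (hcs : ∀ c : ℝ, IsCompact {x : X | Φ x ≤ (c : EReal)})
    (hlam : lam = sInf (RayleighSet Φ p)) (hpos : 0 < lam)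
    (g : X) (gj : ℕ → X) (hg : Tendsto gj atTop (𝓝 g))
    (uj : ℕ → X)
    (hit : ∀ j : ℕ, ∃ ξ : X →L[ℝ] ℝ, ξ ∈ ERealSubdiff Φ (uj j) ∧ ξ ∈ Jdual p (gj j)) :
    ∃ (ℓ : ℕ → ℕ) (u : X), StrictMono ℓ ∧
      Tendsto (fun n => uj (ℓ n)) atTop (𝓝 u) ∧
      (∃ ξ : X →L[ℝ] ℝ, ξ ∈ ERealSubdiff Φ u ∧ ξ ∈ Jdual p g) ∧
      Tendsto (fun n => Φ (uj (ℓ n))) atTop (𝓝 (Φ u)) := by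
  have hp0 : 0 < p := by linarith
  have hbot : ∀ x, Φ x ≠ ⊥ := fun x => ne_bot_of_le_ne_bot EReal.zero_ne_bot (hnn x)
  have h0 := hhom.map_zero hp0
  have hray : ∀ x, Φ x ≠ ⊤ → lam * ‖x‖ ^ p ≤ p * (Φ x).toReal :=
    hlam ▸ fun x => sInf_rayleighSet_mul_rpow_le hp0 hnn
  have hdom : ∀ j, Φ (uj j) ≠ ⊤ := fun j => by
    obtain ⟨ξ, hξ, -⟩ := hit j
    exact ne_top_of_mem_ERealSubdiff hξ (w := 0) (by simp [h0])
  obtain ⟨M, hM⟩ := exists_forall_le_of_mem_ERealSubdiff_of_mem_Jdual hp h0 hbot hray hpos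
    hg.norm.bddAbove_range hit
  obtain ⟨u, huM, ℓ, hℓ, hu⟩ := (hcs M).tendsto_subseq hM
  have hΦu : Φ u ≠ ⊤ := ne_top_of_le_ne_top (EReal.coe_ne_top M) huM
  have hmin : ∀ j, IsMinOn (proxEnergy Φ p (uj j + gj j)) {w | Φ w ≠ ⊤} (uj j) := fun j =>
    (exists_mem_ERealSubdiff_inter_Jdual_iff_isMinOn hp hconv hbot (hdom j)).1 (hit j)
  have hgℓ := hg.comp hℓ.tendsto_atTop
  have hΦ := tendsto_toReal_of_isMinOn_proxEnergy hp0 hlsc hbot hu hgℓ hΦu (fun n => hdom _)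
    fun n => hmin _
  refine ⟨ℓ, u, hℓ, hu, (exists_mem_ERealSubdiff_inter_Jdual_iff_isMinOn hp hconv hbot hΦu).2
    (isMinOn_proxEnergy_of_tendsto hp0.le hu hgℓ hΦ fun n => hmin _), ?_⟩
  have hΦ' := EReal.tendsto_coe.2 hΦ
  rw [EReal.coe_toReal hΦu (hbot u)] at hΦ'
  exact hΦ'.congr fun n => EReal.coe_toReal (hdom _) (hbot _)

theorem inverse_iteration_compactness (Φ : X → EReal) (p lam : ℝ) (hp : 1 < p)
    (hnn : ∀ x : X, (0 : EReal) ≤ Φ x)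
    (hconv : IsConvexE Φ) (hsc : IsStrictConvexOnDom Φ)
    (hlsc : LowerSemicontinuous Φ) (hhom : IsHomog Φ p)
    (hcs : ∀ c : ℝ, IsCompact {x : X | Φ x ≤ (c : EReal)})
    (hlam : lam = sInf (RayleighSet Φ p)) (hpos : 0 < lam)
    (g : X) (gj : ℕ → X) (hg : Tendsto gj atTop (𝓝 g))
    (uj : ℕ → X)
    (hit : ∀ j : ℕ, ∃ ξ : X →L[ℝ] ℝ, ξ ∈ ERealSubdiff Φ (uj j) ∧ ξ ∈ Jdual p (gj j)) :
    ∃ (ℓ : ℕ → ℕ) (u : X), StrictMono ℓ ∧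
      Tendsto (fun n => uj (ℓ n)) atTop (𝓝 u) ∧
      (∃ ξ : X →L[ℝ] ℝ, ξ ∈ ERealSubdiff Φ u ∧ ξ ∈ Jdual p g) ∧
      Tendsto (fun n => Φ (uj (ℓ n))) atTop (𝓝 (Φ u)) :=
  inverse_iteration_compactness_general Φ p lam hp hnn hconv hlsc hhom hcs hlam hpos g gj hg uj hit
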